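/- Fix N ≥ 2 and d ≥ 2. Every eigenvalue λ of the real symmetric matrix M_F^d(N) satisfies 0 ≤ λ ≤ d²; in particular its spectral radius (largest eigenvalue) is at most d². -/
import Mathlib


/-- `AddBox α μ` means that the Young diagram `μ` is obtained from the Young diagram `α`
by adding a single box; equivalently, `α` is obtained from `μ` by removing a box:
the diagram of `α` is contained in the diagram of `μ` and `μ` has exactly one more cell. -/
def AddBox (α μ : YoungDiagram) : Prop :=
  α ≤ μ ∧ μ.card = α.card + 1

/-- `MoveBox μ ν` (written `μ/ν = □` in the paper): `μ ≠ ν` and some Young diagram can be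
obtained from both `μ` and `ν` by removing a single box, i.e. `μ` is obtained from `ν`
by moving a single box. -/
def MoveBox (μ ν : YoungDiagram) : Prop :=
  μ ≠ ν ∧ ∃ α : YoungDiagram, AddBox α μ ∧ AddBox α ν

/-- `nBox μ` is the number `n_μ` of Young diagrams obtained from `μ` by removing a box. -/
noncomputable def nBox (μ : YoungDiagram) : ℕ :=
  Nat.card {α : YoungDiagram // AddBox α μ}

/-- Partitions of `N` with at most `d` parts, identified with Young diagrams with `N` boxes
whose first column has height at most `d`. -/
abbrev PartLE (N d : ℕ) : Type :=
  {μ : YoungDiagram // μ.card = N ∧ μ.colLen 0 ≤ d}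

instance : DecidableEq YoungDiagram := fun μ ν =>
  decidable_of_iff (μ.cells = ν.cells) (YoungDiagram.ext_iff).symm

theorem cell_lt_card {μ : YoungDiagram} {i j : ℕ} (h : (i, j) ∈ μ.cells) :
    i < μ.card ∧ j < μ.card := by
  rw [YoungDiagram.mem_cells] at h
  constructor
  · have hsub : Finset.range (i + 1) ×ˢ ({j} : Finset ℕ) ⊆ μ.cells := by
      rintro ⟨a, b⟩ hab
      rw [Finset.mem_product, Finset.mem_range, Finset.mem_singleton] at hab
      rw [YoungDiagram.mem_cells]
      obtain ⟨h1, h2⟩ := hab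
      subst h2
      exact μ.up_left_mem (Nat.lt_succ_iff.mp h1) le_rfl h
    have := Finset.card_le_card hsub
    simpa [YoungDiagram.card] using this
  · have hsub : ({i} : Finset ℕ) ×ˢ Finset.range (j + 1) ⊆ μ.cells := by
      rintro ⟨a, b⟩ hab
      rw [Finset.mem_product, Finset.mem_range, Finset.mem_singleton] at hab
      rw [YoungDiagram.mem_cells]
      obtain ⟨h1, h2⟩ := hab
      subst h1
      exact μ.up_left_mem le_rfl (Nat.lt_succ_iff.mp h2) h
    have := Finset.card_le_card hsub
    simpa [YoungDiagram.card] using this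

noncomputable instance (N d : ℕ) : Fintype (PartLE N d) := by
  apply Fintype.ofInjective
    (β := {s : Finset (ℕ × ℕ) // s ∈ (Finset.range N ×ˢ Finset.range N).powerset})
    (f := fun μ => ⟨μ.1.cells, by
      rw [Finset.mem_powerset]
      rintro ⟨i, j⟩ hc
      have h := cell_lt_card hc
      rw [μ.2.1] at h
      simp only [Finset.mem_product, Finset.mem_range]
      exact h⟩)
  rintro ⟨μ, hμ⟩ ⟨ν, hν⟩ h
  simp only [Subtype.mk.injEq] at h ⊢
  exact YoungDiagram.ext h

open scoped Classical in
/-- The Teleportation Matrix `M_F^d(N)`, indexed by the partitions of `N` with at most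
`d` parts: the diagonal entry at `μ` is `n_μ`, the off-diagonal entry at `(μ, ν)` is `1`
if `μ/ν = □` and `0` otherwise.  For `d ≥ N` this is the full matrix `M_F(N)`. -/
noncomputable def MF (N d : ℕ) : Matrix (PartLE N d) (PartLE N d) ℝ :=
  fun μ ν => if μ = ν then (nBox μ.1 : ℝ) else if MoveBox μ.1 ν.1 then 1 else 0

/-! ### Auxiliary lemmas -/

open scoped Classical

lemma MFaux.mem_of_le {α μ : YoungDiagram} (h : α ≤ μ) {c : ℕ × ℕ} (hc : c ∈ α) : c ∈ μ := by
  have := YoungDiagram.cells_subset_iff.2 h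
  exact (YoungDiagram.mem_cells c).1 (this ((YoungDiagram.mem_cells c).2 hc))

lemma MFaux.colLen_le_of_le {α μ : YoungDiagram} (h : α ≤ μ) (j : ℕ) :
    α.colLen j ≤ μ.colLen j := by
  by_contra hc
  push_neg at hc
  have h1 : (μ.colLen j, j) ∈ α := YoungDiagram.mem_iff_lt_colLen.2 hc
  have h2 := MFaux.mem_of_le h h1
  rw [YoungDiagram.mem_iff_lt_colLen] at h2
  omega

lemma MFaux.removed_cell {α μ : YoungDiagram} (h : AddBox α μ) :
    ∃ c, c ∈ μ ∧ c ∉ α ∧ α.cells = μ.cells.erase c := by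
  have hsub : α.cells ⊆ μ.cells := YoungDiagram.cells_subset_iff.2 h.1
  have hcard : (μ.cells \ α.cells).card = 1 := by
    rw [Finset.card_sdiff_of_subset hsub]
    have := h.2
    simp only [YoungDiagram.card] at this ⊢
    omega
  obtain ⟨c, hc⟩ := Finset.card_eq_one.1 hcard
  have hcμ : c ∈ μ.cells ∧ c ∉ α.cells := by
    have : c ∈ μ.cells \ α.cells := by rw [hc]; exact Finset.mem_singleton_self c
    exact ⟨(Finset.mem_sdiff.1 this).1, (Finset.mem_sdiff.1 this).2⟩
  refine ⟨c, (YoungDiagram.mem_cells c).1 hcμ.1,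
    fun hmem => hcμ.2 ((YoungDiagram.mem_cells c).2 hmem), ?_⟩
  ext x
  simp only [Finset.mem_erase]
  constructor
  · intro hx
    refine ⟨fun hxc => hcμ.2 (hxc ▸ hx), hsub hx⟩
  · rintro ⟨hxc, hxμ⟩
    by_contra hxα
    have : x ∈ μ.cells \ α.cells := Finset.mem_sdiff.2 ⟨hxμ, hxα⟩
    rw [hc, Finset.mem_singleton] at this
    exact hxc this

lemma MFaux.not_lt_aux {μ α : YoungDiagram} {c c' : ℕ × ℕ} (hc'μ : c' ∈ μ)
    (hα : α.cells = μ.cells.erase c) (hcα : c ∉ α)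
    (hrow : c.1 = c'.1) (hlt : c.2 < c'.2) : False := by
  have hne : c' ≠ c := fun h => by rw [h] at hlt; omega
  have hc'α : c' ∈ α := by
    rw [← YoungDiagram.mem_cells, hα, Finset.mem_erase]
    exact ⟨hne, (YoungDiagram.mem_cells c').2 hc'μ⟩
  obtain ⟨i, j⟩ := c
  obtain ⟨i', j'⟩ := c'
  simp only at hrow hlt
  subst hrow
  exact hcα (α.up_left_mem le_rfl (le_of_lt hlt) hc'α)

lemma MFaux.cell_eq_of_row_eq {μ : YoungDiagram} {c c' : ℕ × ℕ}
    (hcμ : c ∈ μ) (hc'μ : c' ∈ μ)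
    {α β : YoungDiagram} (hα : α.cells = μ.cells.erase c) (hβ : β.cells = μ.cells.erase c')
    (hcα : c ∉ α) (hc'β : c' ∉ β) (hrow : c.1 = c'.1) : c = c' := by
  rcases lt_trichotomy c.2 c'.2 with hlt | heq | hgt
  · exact absurd (MFaux.not_lt_aux hc'μ hα hcα hrow hlt) (by simp)
  · exact Prod.ext hrow heq
  · exact absurd (MFaux.not_lt_aux hcμ hβ hc'β hrow.symm hgt) (by simp)

lemma MFaux.removed_col {α μ : YoungDiagram} {c : ℕ × ℕ} (hcμ : c ∈ μ) (hcα : c ∉ α)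
    (hα : α.cells = μ.cells.erase c) : c.2 = α.rowLen c.1 := by
  have le1 : α.rowLen c.1 ≤ c.2 := by
    by_contra h
    push_neg at h
    exact hcα (YoungDiagram.mem_iff_lt_rowLen.2 h)
  obtain ⟨i, j⟩ := c
  simp only at le1 hcμ hcα ⊢
  rcases Nat.eq_zero_or_pos j with h0 | hpos
  · omega
  · have hmem : (i, j - 1) ∈ μ := μ.up_left_mem le_rfl (by omega) hcμ
    have hne : ((i, j - 1) : ℕ × ℕ) ≠ (i, j) := by
      intro h
      have := congrArg Prod.snd h
      simp only at this
      omega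
    have hmemα : (i, j - 1) ∈ α := by
      rw [← YoungDiagram.mem_cells, hα, Finset.mem_erase]
      exact ⟨hne, (YoungDiagram.mem_cells _).2 hmem⟩
    rw [YoungDiagram.mem_iff_lt_rowLen] at hmemα
    omega

lemma MFaux.addbox_inj_row {α μ ν : YoungDiagram} {c c' : ℕ × ℕ}
    (hcμ : c ∈ μ) (hcα : c ∉ α) (hα : α.cells = μ.cells.erase c)
    (hc'ν : c' ∈ ν) (hc'α : c' ∉ α) (hα' : α.cells = ν.cells.erase c')
    (hrow : c.1 = c'.1) : μ = ν := by
  have h1 := MFaux.removed_col hcμ hcα hα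
  have h2 := MFaux.removed_col hc'ν hc'α hα'
  have hcc : c = c' := Prod.ext hrow (by rw [h1, h2, hrow])
  subst hcc
  apply YoungDiagram.ext
  have e1 : μ.cells = insert c α.cells := by
    rw [hα, Finset.insert_erase ((YoungDiagram.mem_cells c).2 hcμ)]
  have e2 : ν.cells = insert c α.cells := by
    rw [hα', Finset.insert_erase ((YoungDiagram.mem_cells c).2 hc'ν)]
  rw [e1, e2]

lemma MFaux.common_eq_inf {α μ ν : YoungDiagram} (hne : μ ≠ ν)
    (h1 : AddBox α μ) (h2 : AddBox α ν) : α = μ ⊓ ν := by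
  have hsub : α.cells ⊆ (μ ⊓ ν).cells :=
    YoungDiagram.cells_subset_iff.2 (le_inf h1.1 h2.1)
  have hsub2 : (μ ⊓ ν).cells ⊆ μ.cells := YoungDiagram.cells_subset_iff.2 inf_le_left
  have hsub3 : (μ ⊓ ν).cells ⊆ ν.cells := YoungDiagram.cells_subset_iff.2 inf_le_right
  have hc1 := Finset.card_le_card hsub
  have hc2 := Finset.card_le_card hsub2
  have hc3 := Finset.card_le_card hsub3
  have hμc := h1.2
  have hνc := h2.2
  simp only [YoungDiagram.card] at hμc hνc
  have hlt : (μ ⊓ ν).cells.card ≤ α.cells.card := by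
    by_contra h
    push_neg at h
    have e1 : μ.cells = (μ ⊓ ν).cells :=
      (Finset.eq_of_subset_of_card_le hsub2 (by omega)).symm
    have e2 : ν.cells = (μ ⊓ ν).cells :=
      (Finset.eq_of_subset_of_card_le hsub3 (by omega)).symm
    exact hne (YoungDiagram.ext (e1.trans e2.symm))
  exact YoungDiagram.ext (Finset.eq_of_subset_of_card_le hsub hlt)

lemma MFaux.common_unique {α β μ ν : YoungDiagram} (hne : μ ≠ ν)
    (h1 : AddBox α μ) (h2 : AddBox α ν) (h3 : AddBox β μ) (h4 : AddBox β ν) : α = β :=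
  (MFaux.common_eq_inf hne h1 h2).trans (MFaux.common_eq_inf hne h3 h4).symm

/-- Row bound: the first coordinate of the removed cell lies below `colLen 0`. -/
lemma MFaux.row_lt {μ : YoungDiagram} {c : ℕ × ℕ} (hcμ : c ∈ μ) : c.1 < μ.colLen 0 := by
  have : (c.1, 0) ∈ μ := μ.up_left_mem le_rfl (Nat.zero_le _) hcμ
  rwa [YoungDiagram.mem_iff_lt_colLen] at this

/-- number of diagrams obtained from `μ` by removing a box, counted inside `PartLE (N-1) d` -/
lemma MFaux.card_remove_le {N d : ℕ} (μ : PartLE N d) :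
    (Finset.univ.filter (fun α : PartLE (N - 1) d => AddBox α.1 μ.1)).card ≤ d := by
  classical
  have hmap : ∀ α : PartLE (N - 1) d, α ∈ Finset.univ.filter
      (fun α : PartLE (N - 1) d => AddBox α.1 μ.1) →
      (if h : AddBox α.1 μ.1 then (Classical.choose (MFaux.removed_cell h)).1 else 0)
        ∈ Finset.range d := by
    intro α hα
    rw [Finset.mem_filter] at hα
    rw [dif_pos hα.2, Finset.mem_range]
    obtain ⟨h1, -, -⟩ := Classical.choose_spec (MFaux.removed_cell hα.2)
    exact lt_of_lt_of_le (MFaux.row_lt h1) μ.2.2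
  have hinj : ∀ α ∈ Finset.univ.filter (fun α : PartLE (N - 1) d => AddBox α.1 μ.1),
      ∀ β ∈ Finset.univ.filter (fun α : PartLE (N - 1) d => AddBox α.1 μ.1),
      (if h : AddBox α.1 μ.1 then (Classical.choose (MFaux.removed_cell h)).1 else 0) =
      (if h : AddBox β.1 μ.1 then (Classical.choose (MFaux.removed_cell h)).1 else 0) →
      α = β := by
    intro α hα β hβ heq
    rw [Finset.mem_filter] at hα hβ
    rw [dif_pos hα.2, dif_pos hβ.2] at heq
    obtain ⟨ha1, ha2, ha3⟩ := Classical.choose_spec (MFaux.removed_cell hα.2)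
    obtain ⟨hb1, hb2, hb3⟩ := Classical.choose_spec (MFaux.removed_cell hβ.2)
    have := MFaux.cell_eq_of_row_eq ha1 hb1 ha3 hb3 ha2 hb2 heq
    refine Subtype.ext (YoungDiagram.ext ?_)
    rw [ha3, hb3, this]
  have := Finset.card_le_card_of_injOn _ hmap hinj
  simpa using this

/-- number of diagrams obtained from `α` by adding a box, counted inside `PartLE N d` -/
lemma MFaux.card_add_le {N d : ℕ} (α : PartLE (N - 1) d) :
    (Finset.univ.filter (fun μ : PartLE N d => AddBox α.1 μ.1)).card ≤ d := by
  classical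
  have hmap : ∀ μ : PartLE N d, μ ∈ Finset.univ.filter
      (fun μ : PartLE N d => AddBox α.1 μ.1) →
      (if h : AddBox α.1 μ.1 then (Classical.choose (MFaux.removed_cell h)).1 else 0)
        ∈ Finset.range d := by
    intro μ hμ
    rw [Finset.mem_filter] at hμ
    rw [dif_pos hμ.2, Finset.mem_range]
    obtain ⟨h1, -, -⟩ := Classical.choose_spec (MFaux.removed_cell hμ.2)
    exact lt_of_lt_of_le (MFaux.row_lt h1) μ.2.2
  have hinj : ∀ μ ∈ Finset.univ.filter (fun μ : PartLE N d => AddBox α.1 μ.1),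
      ∀ ν ∈ Finset.univ.filter (fun μ : PartLE N d => AddBox α.1 μ.1),
      (if h : AddBox α.1 μ.1 then (Classical.choose (MFaux.removed_cell h)).1 else 0) =
      (if h : AddBox α.1 ν.1 then (Classical.choose (MFaux.removed_cell h)).1 else 0) →
      μ = ν := by
    intro μ hμ ν hν heq
    rw [Finset.mem_filter] at hμ hν
    rw [dif_pos hμ.2, dif_pos hν.2] at heq
    obtain ⟨ha1, ha2, ha3⟩ := Classical.choose_spec (MFaux.removed_cell hμ.2)
    obtain ⟨hb1, hb2, hb3⟩ := Classical.choose_spec (MFaux.removed_cell hν.2)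
    exact Subtype.ext (MFaux.addbox_inj_row ha1 ha2 ha3 hb1 hb2 hb3 heq)
  have := Finset.card_le_card_of_injOn _ hmap hinj
  simpa using this

/-- membership criteria: a diagram below `μ ∈ PartLE N d` by one box lies in `PartLE (N-1) d` -/
lemma MFaux.sub_mem {N d : ℕ} (hN : 1 ≤ N) (μ : PartLE N d) {α : YoungDiagram}
    (h : AddBox α μ.1) : α.card = N - 1 ∧ α.colLen 0 ≤ d := by
  constructor
  · have := h.2
    have := μ.2.1
    omega
  · exact le_trans (MFaux.colLen_le_of_le h.1 0) μ.2.2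

/-- The diagonal entry of `MF` counts sub-diagrams inside `PartLE (N-1) d`. -/
lemma MFaux.nBox_eq {N d : ℕ} (hN : 1 ≤ N) (μ : PartLE N d) :
    nBox μ.1 = (Finset.univ.filter
      (fun α : PartLE (N - 1) d => AddBox α.1 μ.1)).card := by
  classical
  have e : {α : YoungDiagram // AddBox α μ.1} ≃
      {α : PartLE (N - 1) d // AddBox α.1 μ.1} :=
    { toFun := fun x => ⟨⟨x.1, MFaux.sub_mem hN μ x.2⟩, x.2⟩
      invFun := fun x => ⟨x.1.1, x.2⟩
      left_inv := fun x => rfl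
      right_inv := fun x => rfl }
  rw [nBox, Nat.card_congr e, Nat.card_eq_fintype_card, Fintype.card_subtype]

/-- `MF` is the Gram matrix of the box-adding incidence. -/
lemma MFaux.MF_eq {N d : ℕ} (hN : 2 ≤ N) (μ ν : PartLE N d) :
    MF N d μ ν = ∑ α : PartLE (N - 1) d,
      (if AddBox α.1 μ.1 then (1 : ℝ) else 0) * (if AddBox α.1 ν.1 then 1 else 0) := by
  classical
  have hsum : ∑ α : PartLE (N - 1) d,
      (if AddBox α.1 μ.1 then (1 : ℝ) else 0) * (if AddBox α.1 ν.1 then 1 else 0) =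
      ((Finset.univ.filter
        (fun α : PartLE (N - 1) d => AddBox α.1 μ.1 ∧ AddBox α.1 ν.1)).card : ℝ) := by
    rw [Finset.card_filter]
    push_cast
    apply Finset.sum_congr rfl
    intro α _
    by_cases h1 : AddBox α.1 μ.1 <;> by_cases h2 : AddBox α.1 ν.1 <;>
      simp [h1, h2]
  rw [MF, hsum]
  by_cases heq : μ = ν
  · subst heq
    rw [if_pos rfl, MFaux.nBox_eq (by omega) μ]
    simp only [and_self]
  · rw [if_neg heq]
    by_cases hmv : MoveBox μ.1 ν.1
    · rw [if_pos hmv]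
      obtain ⟨hne, α0, h1, h2⟩ := hmv
      have hcard : (Finset.univ.filter
          (fun α : PartLE (N - 1) d => AddBox α.1 μ.1 ∧ AddBox α.1 ν.1)).card = 1 := by
        rw [Finset.card_eq_one]
        refine ⟨⟨α0, MFaux.sub_mem (by omega) μ h1⟩, ?_⟩
        rw [Finset.eq_singleton_iff_unique_mem]
        constructor
        · simp [h1, h2]
        · intro β hβ
          rw [Finset.mem_filter] at hβ
          exact Subtype.ext (MFaux.common_unique hne hβ.2.1 hβ.2.2 h1 h2)
      rw [hcard]
      norm_num
    · rw [if_neg hmv]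
      have hcard : (Finset.univ.filter
          (fun α : PartLE (N - 1) d => AddBox α.1 μ.1 ∧ AddBox α.1 ν.1)) = ∅ := by
        rw [Finset.filter_eq_empty_iff]
        intro α _
        intro hc
        exact hmv ⟨fun h => heq (Subtype.ext h), α.1, hc.1, hc.2⟩
      rw [hcard]
      norm_num

/-- purely algebraic rearrangement: quadratic form of a Gram matrix -/
lemma MFaux.sum_quad {I J : Type*} [Fintype I] [Fintype J] (a : I → J → ℝ) (v : I → ℝ) :
    ∑ i, v i * (∑ j, (∑ k, a i k * a j k) * v j) =
    ∑ k, (∑ i, a i k * v i) ^ 2 := by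
  have lhs : ∑ i, v i * (∑ j, (∑ k, a i k * a j k) * v j)
      = ∑ i, ∑ k, ∑ j, (a i k * v i) * (a j k * v j) := by
    apply Finset.sum_congr rfl
    intro i _
    rw [Finset.mul_sum]
    calc ∑ j, v i * ((∑ k, a i k * a j k) * v j)
        = ∑ j, ∑ k, (a i k * v i) * (a j k * v j) := by
          apply Finset.sum_congr rfl
          intro j _
          rw [Finset.sum_mul, Finset.mul_sum]
          exact Finset.sum_congr rfl fun k _ => by ring
      _ = ∑ k, ∑ j, (a i k * v i) * (a j k * v j) := Finset.sum_comm
  rw [lhs, Finset.sum_comm]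
  apply Finset.sum_congr rfl
  intro k _
  rw [sq, Finset.sum_mul_sum]

/-- Fix `N ≥ 2` and `d ≥ 2`.  Every eigenvalue `λ` of the real symmetric matrix `M_F^d(N)`
satisfies `0 ≤ λ ≤ d²`; in particular, its spectral radius is at most `d²`. -/
theorem MF_eigenvalue_bounds (N d : ℕ) (hN : 2 ≤ N) (hd : 2 ≤ d) (lam : ℝ)
    (v : PartLE N d → ℝ) (hv : v ≠ 0) (heig : (MF N d).mulVec v = lam • v) :
    0 ≤ lam ∧ lam ≤ (d : ℝ) ^ 2 := by
  classical
  set S : ℝ := ∑ μ : PartLE N d, v μ ^ 2 with hS_def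
  have hSpos : 0 < S := by
    obtain ⟨μ0, hμ0⟩ := Function.ne_iff.1 hv
    exact Finset.sum_pos' (fun _ _ => sq_nonneg _)
      ⟨μ0, Finset.mem_univ _, lt_of_le_of_ne (sq_nonneg _) (Ne.symm (pow_ne_zero 2 hμ0))⟩
  set a : PartLE N d → PartLE (N - 1) d → ℝ :=
    fun μ α => if AddBox α.1 μ.1 then 1 else 0 with ha_def
  set w : PartLE (N - 1) d → ℝ := fun α => ∑ μ : PartLE N d, a μ α * v μ with hw_def
  -- key identity: lam * S = ∑ w²
  have key : lam * S = ∑ α : PartLE (N - 1) d, w α ^ 2 := by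
    have h1 : ∑ μ : PartLE N d, v μ * ((MF N d).mulVec v μ) = lam * S := by
      rw [heig, hS_def, Finset.mul_sum]
      apply Finset.sum_congr rfl
      intro μ _
      simp [smul_eq_mul]
      ring
    rw [← h1]
    have h2 : ∀ μ : PartLE N d, (MF N d).mulVec v μ =
        ∑ ν : PartLE N d, (∑ α : PartLE (N - 1) d, a μ α * a ν α) * v ν := by
      intro μ
      rw [Matrix.mulVec, dotProduct]
      apply Finset.sum_congr rfl
      intro ν _
      rw [MFaux.MF_eq hN μ ν]
    calc ∑ μ : PartLE N d, v μ * ((MF N d).mulVec v μ)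
        = ∑ μ : PartLE N d, v μ *
            (∑ ν : PartLE N d, (∑ α : PartLE (N - 1) d, a μ α * a ν α) * v ν) := by
          apply Finset.sum_congr rfl
          intro μ _
          rw [h2]
      _ = ∑ α : PartLE (N - 1) d, w α ^ 2 := MFaux.sum_quad a v
  have hwsum_nonneg : 0 ≤ ∑ α : PartLE (N - 1) d, w α ^ 2 :=
    Finset.sum_nonneg fun _ _ => sq_nonneg _
  -- upper bound
  have hw_filter : ∀ α : PartLE (N - 1) d, w α =
      ∑ μ ∈ Finset.univ.filter (fun μ : PartLE N d => AddBox α.1 μ.1), v μ := by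
    intro α
    rw [hw_def, Finset.sum_filter]
    apply Finset.sum_congr rfl
    intro μ _
    by_cases h : AddBox α.1 μ.1 <;> simp [ha_def, h]
  have hupper : ∑ α : PartLE (N - 1) d, w α ^ 2 ≤ (d : ℝ) ^ 2 * S := by
    have step1 : ∀ α : PartLE (N - 1) d, w α ^ 2 ≤
        (d : ℝ) * ∑ μ ∈ Finset.univ.filter (fun μ : PartLE N d => AddBox α.1 μ.1),
          v μ ^ 2 := by
      intro α
      rw [hw_filter α]
      refine le_trans sq_sum_le_card_mul_sum_sq ?_
      apply mul_le_mul_of_nonneg_right _ (Finset.sum_nonneg fun _ _ => sq_nonneg _)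
      exact_mod_cast MFaux.card_add_le α
    refine le_trans (Finset.sum_le_sum fun α _ => step1 α) ?_
    rw [← Finset.mul_sum]
    have hswap : ∑ α : PartLE (N - 1) d,
        ∑ μ ∈ Finset.univ.filter (fun μ : PartLE N d => AddBox α.1 μ.1), v μ ^ 2 =
        ∑ μ : PartLE N d, ((Finset.univ.filter
          (fun α : PartLE (N - 1) d => AddBox α.1 μ.1)).card : ℝ) * v μ ^ 2 := by
      simp only [Finset.sum_filter]
      rw [Finset.sum_comm]
      apply Finset.sum_congr rfl
      intro μ _
      rw [Finset.card_filter]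
      push_cast
      rw [Finset.sum_mul]
      apply Finset.sum_congr rfl
      intro α _
      by_cases h : AddBox α.1 μ.1 <;> simp [h]
    rw [hswap]
    have hbound : ∑ μ : PartLE N d, ((Finset.univ.filter
        (fun α : PartLE (N - 1) d => AddBox α.1 μ.1)).card : ℝ) * v μ ^ 2 ≤
        (d : ℝ) * S := by
      rw [hS_def, Finset.mul_sum]
      apply Finset.sum_le_sum
      intro μ _
      apply mul_le_mul_of_nonneg_right _ (sq_nonneg _)
      exact_mod_cast MFaux.card_remove_le μ
    calc (d : ℝ) * ∑ μ : PartLE N d, ((Finset.univ.filter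
          (fun α : PartLE (N - 1) d => AddBox α.1 μ.1)).card : ℝ) * v μ ^ 2
        ≤ (d : ℝ) * ((d : ℝ) * S) := by
          apply mul_le_mul_of_nonneg_left hbound (by positivity)
      _ = (d : ℝ) ^ 2 * S := by ring
  constructor
  · nlinarith [key, hwsum_nonneg, hSpos]
  · nlinarith [key, hupper, hSpos]
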